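/- arXiv:1706.02074 — 3 statements merged into one kernel-verified Lean document; each statement's English description precedes it below -/
import Mathlib

section
/- Let κ_ν(x) := ⟨γ̂''(x), ν(x)⟩ / ‖γ̂'(x)‖² (the limiting normal curvature of the folded cuspidal edge φ along its singular curve y = 0). Then for every x ∈ ℝ, κ_ν(x) = 2(b₀'(x)² + b₀(x)(b₀''(x) − 2b₁(x)a''(x))) / (A(x)·√(B(x))), where A(x) = 1 + a'(x)² + 4b₀(x)²b₀'(x)² and B(x) = 1 + 16b₀(x)²b₁(x)² + 4b₀(x)²(b₀'(x) − 2b₁(x)a'(x))². In particular κ_ν(0) = 2b₀'(0)² and κ_ν'(0) = 2b₀'(0)(3b₀''(0) − 2b₁(0)a''(0)). -/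
open Real Set

/-- Cross product of two vectors in ℝ³. -/
noncomputable def cross3 (a b : Fin 3 → ℝ) : Fin 3 → ℝ :=
  ![a 1 * b 2 - a 2 * b 1, a 2 * b 0 - a 0 * b 2, a 0 * b 1 - a 1 * b 0]

/-- Determinant of three vectors in ℝ³. -/
noncomputable def det3 (a b c : Fin 3 → ℝ) : ℝ :=
  Matrix.det (Matrix.of ![a, b, c])

/-- Euclidean norm on ℝ³. -/
noncomputable def norm3 (a : Fin 3 → ℝ) : ℝ :=
  Real.sqrt (a 0 ^ 2 + a 1 ^ 2 + a 2 ^ 2)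

/-- Euclidean inner product on ℝ³. -/
noncomputable def dot3 (a b : Fin 3 → ℝ) : ℝ :=
  a 0 * b 0 + a 1 * b 1 + a 2 * b 2

/-!
Along `y = 0` the singular curve is `γ̂ = (x, a, b₀²)` and `φ_x(x,0) = γ̂'`. Every coordinate of
`φ(x, ·)` has the form `const + y² · (smooth)`, whose second derivative at `0` is twice the smooth
factor there, so `φ_yy(x,0) = (0, 1, 4 b₀ b₁)`; the pointwise formula is then the algebra of the
cross product. Since `b₀(0) = a'(0) = 0`, the denominator `A √B` is `≥ 1` everywhere with equality
at `0`, so its derivative vanishes there and `κ_ν'(0)` is the derivative of the numerator.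
-/

theorem iteratedDeriv_two_eq_deriv_deriv {F : Type*} [NormedAddCommGroup F] [NormedSpace ℝ F]
    (f : ℝ → F) : iteratedDeriv 2 f = deriv (deriv f) := by
  rw [iteratedDeriv_succ, iteratedDeriv_one]

theorem ContDiff.hasDerivAt_iteratedDeriv {f : ℝ → ℝ} {n : WithTop ℕ∞} (hf : ContDiff ℝ n f)
    {m : ℕ} (hm : m < n) (x : ℝ) :
    HasDerivAt (iteratedDeriv m f) (iteratedDeriv (m + 1) f x) x := by
  rw [iteratedDeriv_succ]
  exact (hf.differentiable_iteratedDeriv m hm x).hasDerivAt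

theorem hasDerivAt_vec3 {f g h : ℝ → ℝ} {f' g' h' x : ℝ} (hf : HasDerivAt f f' x)
    (hg : HasDerivAt g g' x) (hh : HasDerivAt h h' x) :
    HasDerivAt (fun t => ![f t, g t, h t]) ![f', g', h'] x := by
  refine hasDerivAt_pi.2 fun i => ?_
  fin_cases i <;> simpa

theorem deriv_vec3 {f g h : ℝ → ℝ} (hf : Differentiable ℝ f) (hg : Differentiable ℝ g)
    (hh : Differentiable ℝ h) :
    deriv (fun t => ![f t, g t, h t]) = fun t => ![deriv f t, deriv g t, deriv h t] :=
  funext fun t => (hasDerivAt_vec3 (hf t).hasDerivAt (hg t).hasDerivAt (hh t).hasDerivAt).deriv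

theorem iteratedDeriv_two_vec3 {f g h : ℝ → ℝ} (hf : ContDiff ℝ 2 f) (hg : ContDiff ℝ 2 g)
    (hh : ContDiff ℝ 2 h) (x : ℝ) :
    iteratedDeriv 2 (fun t => ![f t, g t, h t]) x =
      ![iteratedDeriv 2 f x, iteratedDeriv 2 g x, iteratedDeriv 2 h x] := by
  simp only [iteratedDeriv_two_eq_deriv_deriv]
  rw [deriv_vec3 (hf.differentiable two_ne_zero) (hg.differentiable two_ne_zero)
    (hh.differentiable two_ne_zero)]
  exact (hasDerivAt_vec3 (hf.differentiable_deriv_two x).hasDerivAt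
    (hg.differentiable_deriv_two x).hasDerivAt
    (hh.differentiable_deriv_two x).hasDerivAt).deriv

theorem iteratedDeriv_two_sq {f : ℝ → ℝ} (hf : ContDiff ℝ 2 f) (x : ℝ) :
    iteratedDeriv 2 (fun t => f t ^ 2) x = 2 * (deriv f x ^ 2 + f x * iteratedDeriv 2 f x) := by
  have hd := hf.differentiable two_ne_zero
  have hd' := hf.differentiable_deriv_two
  have h1 : deriv (fun t => f t ^ 2) = fun t => 2 * (f t * deriv f t) := by
    funext t
    rw [((hd t).hasDerivAt.fun_pow 2).deriv]
    ring
  rw [iteratedDeriv_two_eq_deriv_deriv, h1,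
    (((hd x).hasDerivAt.fun_mul (hd' x).hasDerivAt).const_mul 2).deriv,
    iteratedDeriv_two_eq_deriv_deriv]
  ring

theorem iteratedDeriv_two_add_sq_mul_at_zero {k : ℝ → ℝ} (hk : ContDiff ℝ 2 k) (c : ℝ) :
    iteratedDeriv 2 (fun y => c + y ^ 2 * k y) 0 = 2 * k 0 := by
  have hd := hk.differentiable two_ne_zero
  have hd' := hk.differentiable_deriv_two
  have h1 : deriv (fun y => c + y ^ 2 * k y) = fun y => 2 * y * k y + y ^ 2 * deriv k y := by
    funext y
    rw [((hasDerivAt_const y c).fun_add ((hasDerivAt_pow 2 y).fun_mul (hd y).hasDerivAt)).deriv]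
    simp
  rw [iteratedDeriv_two_eq_deriv_deriv, h1]
  simpa using ((((hasDerivAt_id (0 : ℝ)).const_mul 2).fun_mul (hd 0).hasDerivAt).fun_add
    ((hasDerivAt_pow 2 (0 : ℝ)).fun_mul (hd' 0).hasDerivAt)).deriv

theorem hasDerivAt_div_of_isLocalMin {N D : ℝ → ℝ} {n' x : ℝ} (hN : HasDerivAt N n' x)
    (hD : DifferentiableAt ℝ D x) (hmin : IsLocalMin D x) (hD1 : D x = 1) :
    HasDerivAt (fun t => N t / D t) n' x := by
  have h0 := hmin.hasDerivAt_eq_zero hD.hasDerivAt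
  simpa [h0, hD1] using hN.fun_div hD.hasDerivAt (by simp [hD1])

namespace FoldedCuspidalEdge

variable (a b₀ b₁ : ℝ → ℝ)

/-- `A = ‖γ̂'‖²`. -/
noncomputable def A (x : ℝ) : ℝ :=
  1 + deriv a x ^ 2 + 4 * b₀ x ^ 2 * deriv b₀ x ^ 2

/-- `B = ‖φ_x × φ_yy‖²` along `y = 0`. -/
noncomputable def B (x : ℝ) : ℝ :=
  1 + 16 * b₀ x ^ 2 * b₁ x ^ 2 + 4 * b₀ x ^ 2 * (deriv b₀ x - 2 * b₁ x * deriv a x) ^ 2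

noncomputable def kappa (x : ℝ) : ℝ :=
  2 * (deriv b₀ x ^ 2 + b₀ x * (iteratedDeriv 2 b₀ x - 2 * b₁ x * iteratedDeriv 2 a x)) /
    (A a b₀ x * Real.sqrt (B a b₀ b₁ x))

theorem one_le_A (x : ℝ) : 1 ≤ A a b₀ x := by
  unfold A
  nlinarith [sq_nonneg (deriv a x), sq_nonneg (b₀ x * deriv b₀ x)]

theorem one_le_B (x : ℝ) : 1 ≤ B a b₀ b₁ x := by
  unfold B
  nlinarith [sq_nonneg (b₀ x * b₁ x), sq_nonneg (b₀ x * (deriv b₀ x - 2 * b₁ x * deriv a x))]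

variable {a b₀ b₁}

theorem deriv_singularCurve (ha : Differentiable ℝ a) (hb₀ : Differentiable ℝ b₀) (x : ℝ) :
    deriv (fun t => ![t, a t, b₀ t ^ 2]) x = ![1, deriv a x, 2 * (b₀ x * deriv b₀ x)] := by
  rw [(hasDerivAt_vec3 (hasDerivAt_id' x) (ha x).hasDerivAt
    ((hb₀ x).hasDerivAt.fun_pow 2)).deriv]
  simp
  ring

theorem iteratedDeriv_two_singularCurve (ha : ContDiff ℝ 2 a) (hb₀ : ContDiff ℝ 2 b₀) (x : ℝ) :
    iteratedDeriv 2 (fun t => ![t, a t, b₀ t ^ 2]) x =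
      ![0, iteratedDeriv 2 a x, 2 * (deriv b₀ x ^ 2 + b₀ x * iteratedDeriv 2 b₀ x)] := by
  rw [iteratedDeriv_two_vec3 (f := fun t => t) (h := fun t => b₀ t ^ 2) contDiff_id ha
    (hb₀.pow 2), iteratedDeriv_two_sq hb₀]
  simp [iteratedDeriv_two_eq_deriv_deriv]

theorem iteratedDeriv_two_transversal_at_zero {h : ℝ → ℝ} (hh : ContDiff ℝ 2 h)
    (c p q r s : ℝ) :
    iteratedDeriv 2
        (fun y => ![c, p + y ^ 2 / 2, (q + r * y ^ 2 + s * y ^ 3 + h y * y ^ 4) ^ 2]) 0 =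
      ![0, 1, 4 * (q * r)] := by
  set m : ℝ → ℝ := fun y => r + s * y + h y * y ^ 2
  have hform : (fun y => ![c, p + y ^ 2 / 2, (q + r * y ^ 2 + s * y ^ 3 + h y * y ^ 4) ^ 2]) =
      fun y => ![c + y ^ 2 * 0, p + y ^ 2 * (1 / 2),
        q ^ 2 + y ^ 2 * (2 * q * m y + y ^ 2 * m y ^ 2)] := by
    funext y
    ext i
    fin_cases i <;> simp [m] <;> ring
  rw [hform, iteratedDeriv_two_vec3 (by fun_prop) (by fun_prop) (by fun_prop),
    iteratedDeriv_two_add_sq_mul_at_zero contDiff_const,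
    iteratedDeriv_two_add_sq_mul_at_zero contDiff_const,
    iteratedDeriv_two_add_sq_mul_at_zero (by fun_prop)]
  simp [m]
  ring

theorem dot3_unitNormal_div_normSq (p p₂ u u₁ u₂ v : ℝ) :
    dot3 ![0, p₂, 2 * (u₁ ^ 2 + u * u₂)]
        ((norm3 (cross3 ![1, p, 2 * (u * u₁)] ![0, 1, 4 * (u * v)]))⁻¹ •
          cross3 ![1, p, 2 * (u * u₁)] ![0, 1, 4 * (u * v)]) /
      norm3 ![1, p, 2 * (u * u₁)] ^ 2 =
    2 * (u₁ ^ 2 + u * (u₂ - 2 * v * p₂)) /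
      ((1 + p ^ 2 + 4 * u ^ 2 * u₁ ^ 2) *
        Real.sqrt (1 + 16 * u ^ 2 * v ^ 2 + 4 * u ^ 2 * (u₁ - 2 * v * p) ^ 2)) := by
  have hA : norm3 ![1, p, 2 * (u * u₁)] ^ 2 = 1 + p ^ 2 + 4 * u ^ 2 * u₁ ^ 2 := by
    rw [norm3, Real.sq_sqrt (by positivity)]
    simp
    ring
  have hB : norm3 (cross3 ![1, p, 2 * (u * u₁)] ![0, 1, 4 * (u * v)]) =
      Real.sqrt (1 + 16 * u ^ 2 * v ^ 2 + 4 * u ^ 2 * (u₁ - 2 * v * p) ^ 2) := by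
    rw [norm3]
    congr 1
    simp [cross3]
    ring
  rw [hA, hB]
  simp [dot3, cross3]
  field_simp
  ring

theorem A_mul_sqrt_B_eq_one (hb₀0 : b₀ 0 = 0) (ha0' : deriv a 0 = 0) :
    A a b₀ 0 * Real.sqrt (B a b₀ b₁ 0) = 1 := by
  simp [A, B, hb₀0, ha0']

theorem hasDerivAt_kappa_zero (ha : ContDiff ℝ 3 a) (hb₀ : ContDiff ℝ 3 b₀)
    (hb₁ : ContDiff ℝ 1 b₁) (hb₀0 : b₀ 0 = 0) (ha0' : deriv a 0 = 0) :
    HasDerivAt (kappa a b₀ b₁)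
      (2 * deriv b₀ 0 * (3 * iteratedDeriv 2 b₀ 0 - 2 * b₁ 0 * iteratedDeriv 2 a 0)) 0 := by
  have hda : Differentiable ℝ (deriv a) := (ha.of_le (by norm_num)).differentiable_deriv_two
  have hdb₀ : Differentiable ℝ (deriv b₀) := (hb₀.of_le (by norm_num)).differentiable_deriv_two
  have hb₀d : Differentiable ℝ b₀ := hb₀.differentiable (by norm_num)
  have hb₁d : Differentiable ℝ b₁ := hb₁.differentiable (by norm_num)
  have hN : HasDerivAt (fun x => 2 * (deriv b₀ x ^ 2 +
      b₀ x * (iteratedDeriv 2 b₀ x - 2 * b₁ x * iteratedDeriv 2 a x)))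
      (2 * deriv b₀ 0 * (3 * iteratedDeriv 2 b₀ 0 - 2 * b₁ 0 * iteratedDeriv 2 a 0)) 0 := by
    have hb₀' : HasDerivAt (deriv b₀) (iteratedDeriv 2 b₀ 0) 0 := by
      simpa using hb₀.hasDerivAt_iteratedDeriv (m := 1) (by norm_num) 0
    refine ((((hb₀'.fun_pow 2).add ((hb₀d 0).hasDerivAt.fun_mul
      ((hb₀.hasDerivAt_iteratedDeriv (m := 2) (by norm_num) 0).sub
        (((hb₁d 0).hasDerivAt.const_mul 2).fun_mul
          (ha.hasDerivAt_iteratedDeriv (m := 2) (by norm_num) 0)))))).const_mul 2).congr_deriv ?_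
    simp [hb₀0]
    ring
  have hB0 : B a b₀ b₁ 0 ≠ 0 := (one_pos.trans_le (one_le_B a b₀ b₁ 0)).ne'
  have hD : DifferentiableAt ℝ (fun x => A a b₀ x * Real.sqrt (B a b₀ b₁ x)) 0 := by
    unfold A B at hB0 ⊢
    fun_prop (disch := exact hB0)
  have hmin : IsLocalMin (fun x => A a b₀ x * Real.sqrt (B a b₀ b₁ x)) 0 :=
    Filter.Eventually.of_forall fun x => (A_mul_sqrt_B_eq_one hb₀0 ha0').le.trans
      (one_le_mul_of_one_le_of_one_le (one_le_A a b₀ x) (Real.one_le_sqrt.2 (one_le_B a b₀ b₁ x)))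
  exact hasDerivAt_div_of_isLocalMin hN hD hmin (A_mul_sqrt_B_eq_one hb₀0 ha0')

end FoldedCuspidalEdge

theorem stmt1_general (a b₀ b₁ b₂ : ℝ → ℝ) (b₃ : ℝ → ℝ → ℝ)
    (ha : ContDiff ℝ (⊤ : ℕ∞) a) (hb₀ : ContDiff ℝ (⊤ : ℕ∞) b₀)
    (hb₁ : ContDiff ℝ (⊤ : ℕ∞) b₁)
    (hb₃ : ContDiff ℝ (⊤ : ℕ∞) (Function.uncurry b₃))
    (ha0' : deriv a 0 = 0) (hb₀0 : b₀ 0 = 0)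
    (φ : ℝ → ℝ → Fin 3 → ℝ)
    (hφ : ∀ x y, φ x y =
      ![x, a x + y ^ 2 / 2,
        (b₀ x + b₁ x * y ^ 2 + b₂ x * y ^ 3 + b₃ x y * y ^ 4) ^ 2])
    (γ : ℝ → Fin 3 → ℝ) (hγ : ∀ x, γ x = φ x 0)
    (w : ℝ → Fin 3 → ℝ)
    (hw : ∀ x, w x = cross3 (deriv (fun t => φ t 0) x) (iteratedDeriv 2 (φ x) 0))
    (ν : ℝ → Fin 3 → ℝ) (hν : ∀ x, ν x = (norm3 (w x))⁻¹ • w x)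
    (κν : ℝ → ℝ)
    (hκν : ∀ x, κν x =
      dot3 (iteratedDeriv 2 γ x) (ν x) / norm3 (deriv γ x) ^ 2) :
    (∀ x, κν x =
      2 * (deriv b₀ x ^ 2 + b₀ x * (iteratedDeriv 2 b₀ x - 2 * b₁ x * iteratedDeriv 2 a x)) /
        ((1 + deriv a x ^ 2 + 4 * b₀ x ^ 2 * deriv b₀ x ^ 2) *
          Real.sqrt (1 + 16 * b₀ x ^ 2 * b₁ x ^ 2 +
            4 * b₀ x ^ 2 * (deriv b₀ x - 2 * b₁ x * deriv a x) ^ 2))) ∧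
    κν 0 = 2 * deriv b₀ 0 ^ 2 ∧
    deriv κν 0 = 2 * deriv b₀ 0 * (3 * iteratedDeriv 2 b₀ 0 - 2 * b₁ 0 * iteratedDeriv 2 a 0) := by
  have smooth {k : ℕ} {f : ℝ → ℝ} (hf : ContDiff ℝ (⊤ : ℕ∞) f) : ContDiff ℝ k f :=
    hf.of_le (WithTop.coe_le_coe.2 le_top)
  have hγ_eq : γ = fun t => ![t, a t, b₀ t ^ 2] := funext fun t => by simp [hγ, hφ]
  have hκ (x : ℝ) : κν x = FoldedCuspidalEdge.kappa a b₀ b₁ x := by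
    have hγφ : (fun t => φ t 0) = γ := funext fun t => (hγ t).symm
    have hφx : φ x = fun y =>
        ![x, a x + y ^ 2 / 2, (b₀ x + b₁ x * y ^ 2 + b₂ x * y ^ 3 + b₃ x y * y ^ 4) ^ 2] :=
      funext (hφ x)
    have hb₃x : ContDiff ℝ 2 (b₃ x) := smooth (hb₃.comp (contDiff_const.prodMk contDiff_id))
    rw [hκν, hν, hw, hγφ, hγ_eq,
      FoldedCuspidalEdge.deriv_singularCurve (smooth (k := 1) ha).differentiable_one
        (smooth (k := 1) hb₀).differentiable_one,
      FoldedCuspidalEdge.iteratedDeriv_two_singularCurve (smooth ha) (smooth hb₀), hφx,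
      FoldedCuspidalEdge.iteratedDeriv_two_transversal_at_zero hb₃x]
    exact FoldedCuspidalEdge.dot3_unitNormal_div_normSq ..
  refine ⟨hκ, by simp [hκ, FoldedCuspidalEdge.kappa, FoldedCuspidalEdge.A, FoldedCuspidalEdge.B,
    hb₀0, ha0'], ?_⟩
  rw [funext hκ]
  exact (FoldedCuspidalEdge.hasDerivAt_kappa_zero (smooth ha) (smooth hb₀) (smooth hb₁)
    hb₀0 ha0').deriv

/-- For the folded cuspidal edge, the limiting normal curvature
`κ_ν(x) = ⟨γ̂''(x), ν(x)⟩ / ‖γ̂'(x)‖²` along `y = 0` satisfies, for every `x`,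
`κ_ν(x) = 2(b₀'(x)² + b₀(x)(b₀''(x) − 2b₁(x)a''(x))) / (A(x)√(B(x)))` with
`A(x) = 1 + a'(x)² + 4b₀(x)²b₀'(x)²`,
`B(x) = 1 + 16b₀(x)²b₁(x)² + 4b₀(x)²(b₀'(x) − 2b₁(x)a'(x))²`;
in particular `κ_ν(0) = 2b₀'(0)²` and `κ_ν'(0) = 2b₀'(0)(3b₀''(0) − 2b₁(0)a''(0))`. -/
theorem stmt1 (a b₀ b₁ b₂ : ℝ → ℝ) (b₃ : ℝ → ℝ → ℝ)
    (ha : ContDiff ℝ (⊤ : ℕ∞) a) (hb₀ : ContDiff ℝ (⊤ : ℕ∞) b₀)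
    (hb₁ : ContDiff ℝ (⊤ : ℕ∞) b₁) (hb₂ : ContDiff ℝ (⊤ : ℕ∞) b₂)
    (hb₃ : ContDiff ℝ (⊤ : ℕ∞) (Function.uncurry b₃))
    (ha0 : a 0 = 0) (ha0' : deriv a 0 = 0) (hb₀0 : b₀ 0 = 0)
    (φ : ℝ → ℝ → Fin 3 → ℝ)
    (hφ : ∀ x y, φ x y =
      ![x, a x + y ^ 2 / 2,
        (b₀ x + b₁ x * y ^ 2 + b₂ x * y ^ 3 + b₃ x y * y ^ 4) ^ 2])
    (γ : ℝ → Fin 3 → ℝ) (hγ : ∀ x, γ x = φ x 0)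
    (w : ℝ → Fin 3 → ℝ)
    (hw : ∀ x, w x = cross3 (deriv (fun t => φ t 0) x) (iteratedDeriv 2 (φ x) 0))
    (ν : ℝ → Fin 3 → ℝ) (hν : ∀ x, ν x = (norm3 (w x))⁻¹ • w x)
    (κν : ℝ → ℝ)
    (hκν : ∀ x, κν x =
      dot3 (iteratedDeriv 2 γ x) (ν x) / norm3 (deriv γ x) ^ 2) :
    (∀ x, κν x =
      2 * (deriv b₀ x ^ 2 + b₀ x * (iteratedDeriv 2 b₀ x - 2 * b₁ x * iteratedDeriv 2 a x)) /
        ((1 + deriv a x ^ 2 + 4 * b₀ x ^ 2 * deriv b₀ x ^ 2) *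
          Real.sqrt (1 + 16 * b₀ x ^ 2 * b₁ x ^ 2 +
            4 * b₀ x ^ 2 * (deriv b₀ x - 2 * b₁ x * deriv a x) ^ 2))) ∧
    κν 0 = 2 * deriv b₀ 0 ^ 2 ∧
    deriv κν 0 = 2 * deriv b₀ 0 * (3 * iteratedDeriv 2 b₀ 0 - 2 * b₁ 0 * iteratedDeriv 2 a 0) :=
  stmt1_general a b₀ b₁ b₂ b₃ ha hb₀ hb₁ hb₃ ha0' hb₀0 φ hφ γ hγ w hw ν hν κν hκν
end

section
/- The bias invariant of the folded cuspidal edge φ at the origin, defined by B := ‖φ_x‖²·det(φ_x, φ_yy, φ_yyyy)/‖φ_x × φ_yy‖³ with all partial derivatives evaluated at (0,0), equals 24·b₁(0)². -/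
/-!
Along the `x`-axis, `φ(t, 0) = (t, a t, b₀ t ^ 2)` has velocity `(1, 0, 0)` because
`a'(0) = 0` and `b₀(0) = 0`. Along the `y`-axis, `b₀(0) = 0` lets the last coordinate factor as
`φ(0, y)₃ = y⁴ F(y)` with `F(y) = (b₁(0) + b₂(0) y + b₃(0, y) y²)²`, so by the Leibniz rule
`φ_yy = (0, 1, 0)` and `φ_yyyy = (0, 0, 4! F(0)) = (0, 0, 24 b₁(0)²)`. The three vectors are then
`e₁, e₂` and a multiple of `e₃`, so the quotient reduces to the determinant, `24 b₁(0)²`.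
-/
open Real Set

open scoped ContDiff

section IteratedDeriv

variable {𝕜 : Type*} [NontriviallyNormedField 𝕜]

theorem iteratedDeriv_fun_pow_mul_zero {n : ℕ} {F : 𝕜 → 𝕜} (hF : ContDiffAt 𝕜 n F 0) (m : ℕ) :
    iteratedDeriv n (fun y => y ^ m * F y) 0 =
      if m ≤ n then n.choose m * m.factorial * iteratedDeriv (n - m) F 0 else 0 := by
  rw [iteratedDeriv_fun_mul (by fun_prop) hF]
  simp only [iteratedDeriv_fun_pow_zero, Nat.cast_ite, Nat.cast_zero, mul_ite, ite_mul,
    mul_zero, zero_mul, Finset.sum_ite_eq', Finset.mem_range, Nat.lt_succ_iff]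

variable {F : Type*} [NormedAddCommGroup F] [NormedSpace 𝕜 F]

theorem iteratedDeriv_apply {ι : Type*} [Fintype ι] {n : ℕ} {f : 𝕜 → ι → F} {x : 𝕜}
    (hf : ContDiffAt 𝕜 n f x) (i : ι) :
    iteratedDeriv n f x i = iteratedDeriv n (fun y => f y i) x := by
  have h := (ContinuousLinearMap.proj (R := 𝕜) (φ := fun _ : ι => F) i).iteratedFDeriv_comp_left
    hf le_rfl
  simp only [iteratedDeriv_eq_iteratedFDeriv]
  exact (congrArg (fun L => L fun _ => (1 : 𝕜)) h).symm

theorem iteratedDeriv_vec3 {n : ℕ} {f g h : 𝕜 → F} {x : 𝕜} (hf : ContDiffAt 𝕜 n f x)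
    (hg : ContDiffAt 𝕜 n g x) (hh : ContDiffAt 𝕜 n h x) :
    iteratedDeriv n (fun y => ![f y, g y, h y]) x =
      ![iteratedDeriv n f x, iteratedDeriv n g x, iteratedDeriv n h x] := by
  have hv : ContDiffAt 𝕜 n (fun y => ![f y, g y, h y]) x := by
    rw [contDiffAt_pi]
    intro i
    fin_cases i <;> simpa
  ext i
  fin_cases i <;> simp [iteratedDeriv_apply hv]

theorem HasDerivAt.vec3 {f g h : 𝕜 → F} {f' g' h' : F} {x : 𝕜} (hf : HasDerivAt f f' x)
    (hg : HasDerivAt g g' x) (hh : HasDerivAt h h' x) :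
    HasDerivAt (fun y => ![f y, g y, h y]) ![f', g', h'] x := by
  rw [hasDerivAt_pi]
  intro i
  fin_cases i <;> simpa

end IteratedDeriv

noncomputable def foldedCuspidalEdge (a b₀ b₁ b₂ : ℝ → ℝ) (b₃ : ℝ → ℝ → ℝ) (x y : ℝ) :
    Fin 3 → ℝ :=
  ![x, a x + y ^ 2 / 2, (b₀ x + b₁ x * y ^ 2 + b₂ x * y ^ 3 + b₃ x y * y ^ 4) ^ 2]

section FoldedCuspidalEdge

variable {a b₀ b₁ b₂ : ℝ → ℝ} {b₃ : ℝ → ℝ → ℝ}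

theorem deriv_foldedCuspidalEdge_x (ha : DifferentiableAt ℝ a 0) (hb₀ : DifferentiableAt ℝ b₀ 0)
    (ha0' : deriv a 0 = 0) (hb₀0 : b₀ 0 = 0) :
    deriv (fun t => foldedCuspidalEdge a b₀ b₁ b₂ b₃ t 0) 0 = ![1, 0, 0] := by
  have hrestrict : (fun t => foldedCuspidalEdge a b₀ b₁ b₂ b₃ t 0) =
      fun t => ![t, a t, b₀ t ^ 2] := by
    funext t
    simp [foldedCuspidalEdge]
  rw [hrestrict, ((hasDerivAt_id' 0).vec3 ha.hasDerivAt (hb₀.hasDerivAt.fun_pow 2)).deriv]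
  simp [ha0', hb₀0]

theorem foldedCuspidalEdge_zero (hb₀0 : b₀ 0 = 0) :
    foldedCuspidalEdge a b₀ b₁ b₂ b₃ 0 =
      fun y => ![0, a 0 + y ^ 2 / 2, y ^ 4 * (b₁ 0 + b₂ 0 * y + b₃ 0 y * y ^ 2) ^ 2] := by
  funext y
  rw [foldedCuspidalEdge, hb₀0]
  congr 3
  ring

theorem iteratedDeriv_foldedCuspidalEdge_zero (hb₃ : ContDiff ℝ ∞ (b₃ 0)) (hb₀0 : b₀ 0 = 0)
    {n : ℕ} (hn : 0 < n) :
    iteratedDeriv n (foldedCuspidalEdge a b₀ b₁ b₂ b₃ 0) 0 =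
      ![0, if n = 2 then 1 else 0,
        if 4 ≤ n then n.choose 4 * Nat.factorial 4 *
          iteratedDeriv (n - 4) (fun y => (b₁ 0 + b₂ 0 * y + b₃ 0 y * y ^ 2) ^ 2) 0
        else 0] := by
  have hF : ContDiffAt ℝ n (fun y => (b₁ 0 + b₂ 0 * y + b₃ 0 y * y ^ 2) ^ 2) 0 :=
    (contDiff_infty.1 (by fun_prop) n).contDiffAt
  rw [foldedCuspidalEdge_zero hb₀0, iteratedDeriv_vec3 contDiffAt_const (by fun_prop)
    (by fun_prop), iteratedDeriv_const_add hn, iteratedDeriv_div_const,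
    iteratedDeriv_fun_pow_zero, iteratedDeriv_fun_pow_mul_zero hF]
  split_ifs with h2 <;> simp [h2]

end FoldedCuspidalEdge

theorem stmt4_general (a b₀ b₁ b₂ : ℝ → ℝ) (b₃ : ℝ → ℝ → ℝ)
    (ha : ContDiff ℝ (⊤ : ℕ∞) a) (hb₀ : ContDiff ℝ (⊤ : ℕ∞) b₀)
    (hb₃ : ContDiff ℝ (⊤ : ℕ∞) (Function.uncurry b₃))
    (ha0' : deriv a 0 = 0) (hb₀0 : b₀ 0 = 0)
    (φ : ℝ → ℝ → Fin 3 → ℝ)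
    (hφ : ∀ x y, φ x y =
      ![x, a x + y ^ 2 / 2,
        (b₀ x + b₁ x * y ^ 2 + b₂ x * y ^ 3 + b₃ x y * y ^ 4) ^ 2])
    (φX φYY φYYYY : Fin 3 → ℝ)
    (hφX : φX = deriv (fun t => φ t 0) 0)
    (hφYY : φYY = iteratedDeriv 2 (φ 0) 0)
    (hφYYYY : φYYYY = iteratedDeriv 4 (φ 0) 0) :
    norm3 φX ^ 2 * det3 φX φYY φYYYY / norm3 (cross3 φX φYY) ^ 3 = 24 * b₁ 0 ^ 2 := by
  obtain rfl : φ = foldedCuspidalEdge a b₀ b₁ b₂ b₃ := funext₂ hφ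
  have hb₃0 : ContDiff ℝ ∞ (b₃ 0) := hb₃.comp (contDiff_const.prodMk contDiff_id)
  rw [hφX, hφYY, hφYYYY,
    deriv_foldedCuspidalEdge_x (ha.differentiable (by simp) 0) (hb₀.differentiable (by simp) 0)
      ha0' hb₀0,
    iteratedDeriv_foldedCuspidalEdge_zero hb₃0 hb₀0 two_pos,
    iteratedDeriv_foldedCuspidalEdge_zero hb₃0 hb₀0 four_pos]
  simp [norm3, cross3, det3, Matrix.det_fin_three, Nat.factorial]

/-- The bias invariant of the folded cuspidal edge at the origin,
`B = ‖φ_x‖² det(φ_x, φ_yy, φ_yyyy)/‖φ_x × φ_yy‖³` (all partials at `(0,0)`),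
equals `24 b₁(0)²`. -/
theorem stmt4 (a b₀ b₁ b₂ : ℝ → ℝ) (b₃ : ℝ → ℝ → ℝ)
    (ha : ContDiff ℝ (⊤ : ℕ∞) a) (hb₀ : ContDiff ℝ (⊤ : ℕ∞) b₀)
    (hb₁ : ContDiff ℝ (⊤ : ℕ∞) b₁) (hb₂ : ContDiff ℝ (⊤ : ℕ∞) b₂)
    (hb₃ : ContDiff ℝ (⊤ : ℕ∞) (Function.uncurry b₃))
    (ha0 : a 0 = 0) (ha0' : deriv a 0 = 0) (hb₀0 : b₀ 0 = 0)
    (φ : ℝ → ℝ → Fin 3 → ℝ)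
    (hφ : ∀ x y, φ x y =
      ![x, a x + y ^ 2 / 2,
        (b₀ x + b₁ x * y ^ 2 + b₂ x * y ^ 3 + b₃ x y * y ^ 4) ^ 2])
    (φX φYY φYYYY : Fin 3 → ℝ)
    (hφX : φX = deriv (fun t => φ t 0) 0)
    (hφYY : φYY = iteratedDeriv 2 (φ 0) 0)
    (hφYYYY : φYYYY = iteratedDeriv 4 (φ 0) 0) :
    norm3 φX ^ 2 * det3 φX φYY φYYYY / norm3 (cross3 φX φYY) ^ 3 = 24 * b₁ 0 ^ 2 :=
  stmt4_general a b₀ b₁ b₂ b₃ ha hb₀ hb₃ ha0' hb₀0 φ hφ φX φYY φYYYY hφX hφYY hφYYYY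
end

section
/- Assume a''(0)² + 4b₀'(0)⁴ ≠ 0. Then the torsion of the singular curve of the folded cuspidal edge satisfies, at x = 0, τ_Σ(0) = (κ_s(0)·κ_ν'(0) − κ_s'(0)·κ_ν(0))/(κ_s(0)² + κ_ν(0)²) + κ_t(0), where τ_Σ(x) = det(γ̂'(x), γ̂''(x), γ̂'''(x))/‖γ̂'(x) × γ̂''(x)‖², κ_s(x) = det(γ̂'(x), γ̂''(x), ν(x))/‖γ̂'(x)‖³, κ_ν(x) = ⟨γ̂''(x), ν(x)⟩/‖γ̂'(x)‖², and κ_t(0) = det(φ_x, φ_yy, φ_xyy)/‖φ_x × φ_yy‖² − det(φ_x, φ_yy, φ_xyy)·⟨φ_x, φ_yy⟩/(‖φ_x‖²·‖φ_x × φ_yy‖²) evaluated at (0,0). -/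
/-!
Along the singular curve `γ̂' = (1, a', 2b₀b₀')`, `φ_yy = (0, 1, 4b₀b₁)` and `w = γ̂' × φ_yy`,
which at `x = 0` are `e₁`, `e₂`, `e₃`. Since `⟨γ̂', γ̂''⟩ = ⟨w, w'⟩ = 0` at `0`, the lengths
`‖γ̂'‖` and `‖w‖` are stationary there, so differentiating `κ_s` and `κ_ν` at `0` only
differentiates the numerators `det(γ̂', γ̂'', w)` and `⟨γ̂'', w⟩`. With `γ̂''(0) = (0, p, q)`,
`γ̂'''(0) = (0, r, s)` and `φ_xyy(0) = (0, 0, m)` this gives `κ_s = p`, `κ_ν = q`,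
`κ_s' = r + qm`, `κ_ν' = s - pm`, `κ_t = m` and `τ_Σ = (ps - qr)/(p² + q²)`, which is the identity.
-/

open Real Set

section Vec3Calculus

variable {u v w : ℝ → Fin 3 → ℝ} {u' v' w' : Fin 3 → ℝ} {x : ℝ}

lemma hasDerivAt_vec3_s8 {f₀ f₁ f₂ : ℝ → ℝ} {d₀ d₁ d₂ : ℝ}
    (h₀ : HasDerivAt f₀ d₀ x) (h₁ : HasDerivAt f₁ d₁ x) (h₂ : HasDerivAt f₂ d₂ x) :
    HasDerivAt (fun t => ![f₀ t, f₁ t, f₂ t]) ![d₀, d₁, d₂] x := by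
  rw [hasDerivAt_pi]
  intro i
  fin_cases i <;> assumption

lemma HasDerivAt.dot3 (hu : HasDerivAt u u' x) (hv : HasDerivAt v v' x) :
    HasDerivAt (fun t => dot3 (u t) (v t)) (dot3 u' (v x) + dot3 (u x) v') x := by
  have h := fun i => (hasDerivAt_pi.1 hu i).fun_mul (hasDerivAt_pi.1 hv i)
  exact (((h 0).fun_add (h 1)).fun_add (h 2)).congr_deriv (by simp only [_root_.dot3]; ring)

lemma HasDerivAt.cross3 (hu : HasDerivAt u u' x) (hv : HasDerivAt v v' x) :
    HasDerivAt (fun t => cross3 (u t) (v t)) (cross3 u' (v x) + cross3 (u x) v') x := by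
  have h := fun i j => ((hasDerivAt_pi.1 hu i).fun_mul (hasDerivAt_pi.1 hv j)).fun_sub
    ((hasDerivAt_pi.1 hu j).fun_mul (hasDerivAt_pi.1 hv i))
  refine (hasDerivAt_vec3_s8 (h 1 2) (h 2 0) (h 0 1)).congr_deriv ?_
  ext i
  fin_cases i <;>
    simp only [_root_.cross3, Pi.add_apply, Fin.isValue, Fin.zero_eta, Fin.mk_one, Fin.reduceFinMk,
      Matrix.cons_val_zero, Matrix.cons_val_one, Matrix.cons_val] <;>
    ring

lemma det3_eq_dot3_cross3 (a b c : Fin 3 → ℝ) : det3 a b c = dot3 a (cross3 b c) := by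
  simp only [det3, dot3, cross3, Matrix.det_fin_three, Matrix.of_apply, Matrix.cons_val',
    Matrix.cons_val_fin_one, Matrix.cons_val_zero, Matrix.cons_val_one, Matrix.cons_val]
  ring

lemma HasDerivAt.det3 (hu : HasDerivAt u u' x) (hv : HasDerivAt v v' x)
    (hw : HasDerivAt w w' x) :
    HasDerivAt (fun t => det3 (u t) (v t) (w t))
      (det3 u' (v x) (w x) + det3 (u x) v' (w x) + det3 (u x) (v x) w') x := by
  simp only [det3_eq_dot3_cross3]
  convert hu.dot3 (hv.cross3 hw) using 1
  simp only [_root_.dot3, _root_.cross3, Pi.add_apply, Matrix.cons_val_zero, Matrix.cons_val_one,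
    Matrix.cons_val]
  ring

lemma norm3_eq_sqrt_dot3 (a : Fin 3 → ℝ) : norm3 a = √(dot3 a a) := by
  simp only [norm3, dot3]
  ring_nf

lemma HasDerivAt.norm3 (hu : HasDerivAt u u' x) (hx : norm3 (u x) ≠ 0) :
    HasDerivAt (fun t => norm3 (u t)) (_root_.dot3 (u x) u' / norm3 (u x)) x := by
  simp only [norm3_eq_sqrt_dot3] at hx ⊢
  have hpos : _root_.dot3 (u x) (u x) ≠ 0 := fun h => hx (by rw [h, Real.sqrt_zero])
  convert (hu.dot3 hu).sqrt hpos using 1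
  simp only [_root_.dot3]
  field_simp
  ring

lemma det3_smul_right (a b c : Fin 3 → ℝ) (r : ℝ) : det3 a b (r • c) = r * det3 a b c := by
  simp only [det3, Matrix.det_fin_three, Matrix.of_apply, Matrix.cons_val', Pi.smul_apply,
    smul_eq_mul, Matrix.cons_val_fin_one, Matrix.cons_val_zero, Matrix.cons_val_one,
    Matrix.cons_val]
  ring

lemma dot3_smul_right (a b : Fin 3 → ℝ) (r : ℝ) : dot3 a (r • b) = r * dot3 a b := by
  simp only [dot3, Pi.smul_apply, smul_eq_mul]
  ring

end Vec3Calculus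

lemma HasDerivAt.div_of_eq_one {c d : ℝ → ℝ} {c' x : ℝ} (hc : HasDerivAt c c' x)
    (hd : HasDerivAt d 0 x) (hdx : d x = 1) : HasDerivAt (fun t => c t / d t) c' x := by
  simpa [hdx] using hc.fun_div hd (by simp [hdx])

section SecondDerivative

variable {E : Type*} [NormedAddCommGroup E] [NormedSpace ℝ E]

lemma hasDerivAt_smul_self_zero {k : ℝ → E} (hk : ContinuousAt k 0) :
    HasDerivAt (fun y => y • k y) (k 0) 0 := by
  rw [hasDerivAt_iff_tendsto_slope]
  refine hk.continuousWithinAt.tendsto.congr' (eventually_nhdsWithin_of_forall fun y hy => ?_)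
  rw [slope_def_module, zero_smul, sub_zero, sub_zero, smul_smul, inv_mul_cancel₀ hy, one_smul]

lemma iteratedDeriv_two_add_sq_smul_zero {g : ℝ → E} (hg : ContDiff ℝ 1 g) (c : E) :
    iteratedDeriv 2 (fun y => c + y ^ 2 • g y) 0 = (2 : ℝ) • g 0 := by
  have hderiv : deriv (fun y => c + y ^ 2 • g y) =
      fun y => y • ((2 : ℝ) • g y + y • deriv g y) := by
    funext y
    refine (((hasDerivAt_pow 2 y).smul (hg.differentiable one_ne_zero y).hasDerivAt).const_add
      c).deriv.trans ?_
    module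
  rw [iteratedDeriv_succ, iteratedDeriv_one, hderiv]
  refine (hasDerivAt_smul_self_zero ?_).deriv.trans (by simp)
  have := hg.continuous_deriv le_rfl
  have := hg.continuous
  fun_prop

end SecondDerivative

section Curvatures

variable {T A w : ℝ → Fin 3 → ℝ} {A' w' : Fin 3 → ℝ} {x : ℝ}

lemma hasDerivAt_norm3_mul_norm3_pow (n : ℕ) (hT : HasDerivAt T (A x) x) (hw : HasDerivAt w w' x)
    (hTx : norm3 (T x) = 1) (hwx : norm3 (w x) = 1) (hTA : dot3 (T x) (A x) = 0)
    (hww' : dot3 (w x) w' = 0) :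
    HasDerivAt (fun t => norm3 (w t) * norm3 (T t) ^ n) 0 x := by
  have h := (hw.norm3 (by simp [hwx])).fun_mul ((hT.norm3 (by simp [hTx])).fun_pow n)
  exact h.congr_deriv (by simp [hTx, hwx, hTA, hww'])

lemma hasDerivAt_geodesicCurvature (hT : HasDerivAt T (A x) x) (hA : HasDerivAt A A' x)
    (hw : HasDerivAt w w' x) (hTx : norm3 (T x) = 1) (hwx : norm3 (w x) = 1)
    (hTA : dot3 (T x) (A x) = 0) (hww' : dot3 (w x) w' = 0) :
    HasDerivAt (fun t => det3 (T t) (A t) ((norm3 (w t))⁻¹ • w t) / norm3 (T t) ^ 3)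
      (det3 (T x) A' (w x) + det3 (T x) (A x) w') x := by
  have h := (hT.det3 hA hw).div_of_eq_one
    (hasDerivAt_norm3_mul_norm3_pow 3 hT hw hTx hwx hTA hww') (by simp [hTx, hwx])
  have hAA : det3 (A x) (A x) (w x) = 0 :=
    Matrix.det_zero_of_row_eq (i := 0) (j := 1) (by decide) rfl
  simp only [det3_smul_right, inv_mul_eq_div, div_div]
  exact h.congr_deriv (by rw [hAA, zero_add])

lemma hasDerivAt_normalCurvature (hT : HasDerivAt T (A x) x) (hA : HasDerivAt A A' x)
    (hw : HasDerivAt w w' x) (hTx : norm3 (T x) = 1) (hwx : norm3 (w x) = 1)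
    (hTA : dot3 (T x) (A x) = 0) (hww' : dot3 (w x) w' = 0) :
    HasDerivAt (fun t => dot3 (A t) ((norm3 (w t))⁻¹ • w t) / norm3 (T t) ^ 2)
      (dot3 A' (w x) + dot3 (A x) w') x := by
  simp only [dot3_smul_right, inv_mul_eq_div, div_div]
  exact (hA.dot3 hw).div_of_eq_one
    (hasDerivAt_norm3_mul_norm3_pow 2 hT hw hTx hwx hTA hww') (by simp [hTx, hwx])

end Curvatures

lemma torsion_eq_of_normalForm {γ P w ν : ℝ → Fin 3 → ℝ} {κs κν : ℝ → ℝ} {p q r s m : ℝ}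
    (hT : HasDerivAt (deriv γ) ![0, p, q] 0)
    (hA : HasDerivAt (iteratedDeriv 2 γ) ![0, r, s] 0) (hP : HasDerivAt P ![0, 0, m] 0)
    (hT0 : deriv γ 0 = ![1, 0, 0]) (hP0 : P 0 = ![0, 1, 0]) (hpq : p ^ 2 + q ^ 2 ≠ 0)
    (hw : ∀ x, w x = cross3 (deriv γ x) (P x)) (hν : ∀ x, ν x = (norm3 (w x))⁻¹ • w x)
    (hκs : ∀ x, κs x =
      det3 (deriv γ x) (iteratedDeriv 2 γ x) (ν x) / norm3 (deriv γ x) ^ 3)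
    (hκν : ∀ x, κν x =
      dot3 (iteratedDeriv 2 γ x) (ν x) / norm3 (deriv γ x) ^ 2) :
    det3 (deriv γ 0) (iteratedDeriv 2 γ 0) (iteratedDeriv 3 γ 0) /
        norm3 (cross3 (deriv γ 0) (iteratedDeriv 2 γ 0)) ^ 2 =
      (κs 0 * deriv κν 0 - deriv κs 0 * κν 0) / (κs 0 ^ 2 + κν 0 ^ 2) +
        (det3 (deriv γ 0) (P 0) ![0, 0, m] / norm3 (cross3 (deriv γ 0) (P 0)) ^ 2 -
          det3 (deriv γ 0) (P 0) ![0, 0, m] * dot3 (deriv γ 0) (P 0) /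
            (norm3 (deriv γ 0) ^ 2 * norm3 (cross3 (deriv γ 0) (P 0)) ^ 2)) := by
  have hA0 : iteratedDeriv 2 γ 0 = ![0, p, q] := by
    rw [iteratedDeriv_succ, iteratedDeriv_one, hT.deriv]
  have hA3 : iteratedDeriv 3 γ 0 = ![0, r, s] := by rw [iteratedDeriv_succ, hA.deriv]
  rw [← hA0] at hT
  have hw0 : w 0 = ![0, 0, 1] := by simp [hw, hT0, hP0, cross3]
  have hw' : HasDerivAt w ![-q, -m, 0] 0 :=
    (funext hw ▸ hT.cross3 hP).congr_deriv (by simp [hT0, hA0, hP0, cross3])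
  have hTx : norm3 (deriv γ 0) = 1 := by simp [hT0, norm3]
  have hwx : norm3 (w 0) = 1 := by simp [hw0, norm3]
  have hTA : dot3 (deriv γ 0) (iteratedDeriv 2 γ 0) = 0 := by simp [hT0, hA0, dot3]
  have hww : dot3 (w 0) ![-q, -m, 0] = 0 := by simp [hw0, dot3]
  have hκs0 : κs 0 = p := by
    rw [hκs, hν, hwx, hTx, hT0, hA0, hw0]
    simp [det3, Matrix.det_fin_three]
  have hκν0 : κν 0 = q := by
    rw [hκν, hν, hwx, hTx, hA0, hw0]
    simp [dot3]
  have hκs' : deriv κs 0 = r + q * m := by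
    rw [funext hκs, funext hν,
      (hasDerivAt_geodesicCurvature hT hA hw' hTx hwx hTA hww).deriv]
    simp [hT0, hA0, hw0, det3, Matrix.det_fin_three]
  have hκν' : deriv κν 0 = s - p * m := by
    rw [funext hκν, funext hν, (hasDerivAt_normalCurvature hT hA hw' hTx hwx hTA hww).deriv]
    simp [hA0, hw0, dot3, sub_eq_add_neg]
  have hτ : det3 (deriv γ 0) (iteratedDeriv 2 γ 0) (iteratedDeriv 3 γ 0) /
      norm3 (cross3 (deriv γ 0) (iteratedDeriv 2 γ 0)) ^ 2 = (p * s - q * r) / (p ^ 2 + q ^ 2) := by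
    simp [hT0, hA0, hA3, det3, cross3, norm3, Matrix.det_fin_three, add_comm (q ^ 2),
      Real.sq_sqrt (add_nonneg (sq_nonneg p) (sq_nonneg q))]
  have hκt : det3 (deriv γ 0) (P 0) ![0, 0, m] / norm3 (cross3 (deriv γ 0) (P 0)) ^ 2 -
      det3 (deriv γ 0) (P 0) ![0, 0, m] * dot3 (deriv γ 0) (P 0) /
        (norm3 (deriv γ 0) ^ 2 * norm3 (cross3 (deriv γ 0) (P 0)) ^ 2) = m := by
    simp [hT0, hP0, det3, cross3, dot3, norm3, Matrix.det_fin_three]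
  rw [hτ, hκt, hκs0, hκν0, hκs', hκν', div_add' _ _ _ hpq, div_left_inj' hpq]
  ring

section FoldedCuspidalEdge

variable {a b : ℝ → ℝ} {x : ℝ}

lemma deriv_singularCurve (ha : Differentiable ℝ a) (hb : Differentiable ℝ b) :
    deriv (fun t => ![t, a t, b t ^ 2]) = fun x => ![1, deriv a x, 2 * b x * deriv b x] :=
  funext fun x => (hasDerivAt_vec3_s8 (hasDerivAt_id' x) (ha x).hasDerivAt
    (((hb x).hasDerivAt.fun_pow 2).congr_deriv (by ring))).deriv

lemma hasDerivAt_deriv_singularCurve (ha : Differentiable ℝ a) (hb : Differentiable ℝ b)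
    (ha' : DifferentiableAt ℝ (deriv a) x) (hb' : DifferentiableAt ℝ (deriv b) x) :
    HasDerivAt (deriv fun t => ![t, a t, b t ^ 2])
      ![0, deriv (deriv a) x, 2 * deriv b x ^ 2 + 2 * b x * deriv (deriv b) x] x := by
  rw [deriv_singularCurve ha hb]
  exact hasDerivAt_vec3_s8 (hasDerivAt_const x 1) ha'.hasDerivAt
    ((((hb x).hasDerivAt.const_mul 2).fun_mul hb'.hasDerivAt).congr_deriv (by ring))

lemma hasDerivAt_iteratedDeriv_two_singularCurve (ha : Differentiable ℝ a)
    (hb : Differentiable ℝ b) (ha' : Differentiable ℝ (deriv a))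
    (hb' : Differentiable ℝ (deriv b)) (ha'' : DifferentiableAt ℝ (deriv (deriv a)) x)
    (hb'' : DifferentiableAt ℝ (deriv (deriv b)) x) :
    HasDerivAt (iteratedDeriv 2 fun t => ![t, a t, b t ^ 2])
      ![0, deriv (deriv (deriv a)) x,
        6 * deriv b x * deriv (deriv b) x + 2 * b x * deriv (deriv (deriv b)) x] x := by
  rw [iteratedDeriv_succ, iteratedDeriv_one,
    funext fun t => (hasDerivAt_deriv_singularCurve ha hb (ha' t) (hb' t)).deriv]
  exact hasDerivAt_vec3_s8 (hasDerivAt_const x 0) ha''.hasDerivAt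
    (((((hb' x).hasDerivAt.fun_pow 2).const_mul 2).fun_add
      (((hb x).hasDerivAt.const_mul 2).fun_mul hb''.hasDerivAt)).congr_deriv (by ring))

lemma iteratedDeriv_two_foldedCuspidalEdge_zero (c₀ c₁ p₀ p₁ p₂ : ℝ) {g : ℝ → ℝ}
    (hg : ContDiff ℝ 1 g) :
    iteratedDeriv 2
      (fun y => ![c₀, c₁ + y ^ 2 / 2, (p₀ + p₁ * y ^ 2 + p₂ * y ^ 3 + g y * y ^ 4) ^ 2]) 0 =
      ![0, 1, 4 * p₀ * p₁] := by
  set R : ℝ → ℝ := fun y => p₁ + p₂ * y + g y * y ^ 2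
  have hsplit : (fun y => ![c₀, c₁ + y ^ 2 / 2, (p₀ + p₁ * y ^ 2 + p₂ * y ^ 3 + g y * y ^ 4) ^ 2]) =
      fun y => ![c₀, c₁, p₀ ^ 2] + y ^ 2 • ![0, 1 / 2, 2 * p₀ * R y + y ^ 2 * R y ^ 2] := by
    funext y
    ext i
    fin_cases i <;>
      simp only [R, Pi.add_apply, Pi.smul_apply, smul_eq_mul, Fin.isValue, Fin.zero_eta, Fin.mk_one,
        Fin.reduceFinMk, Matrix.cons_val_zero, Matrix.cons_val_one, Matrix.cons_val] <;>
      ring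
  have hR : ContDiff ℝ 1 fun y => ![(0 : ℝ), 1 / 2, 2 * p₀ * R y + y ^ 2 * R y ^ 2] := by
    refine contDiff_pi.2 fun i => ?_
    fin_cases i <;>
      simp only [R, Fin.isValue, Fin.zero_eta, Fin.mk_one, Fin.reduceFinMk, Matrix.cons_val_zero,
        Matrix.cons_val_one, Matrix.cons_val] <;>
      fun_prop
  rw [hsplit, iteratedDeriv_two_add_sq_smul_zero hR]
  ext i
  fin_cases i <;>
    simp only [R, Pi.smul_apply, smul_eq_mul, Fin.isValue, Fin.zero_eta, Fin.mk_one,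
      Fin.reduceFinMk, Matrix.cons_val_zero, Matrix.cons_val_one, Matrix.cons_val] <;>
    ring

end FoldedCuspidalEdge

theorem stmt8_general (a b₀ b₁ b₂ : ℝ → ℝ) (b₃ : ℝ → ℝ → ℝ)
    (ha : ContDiff ℝ (⊤ : ℕ∞) a) (hb₀ : ContDiff ℝ (⊤ : ℕ∞) b₀)
    (hb₁ : ContDiff ℝ (⊤ : ℕ∞) b₁)
    (hb₃ : ContDiff ℝ (⊤ : ℕ∞) (Function.uncurry b₃))
    (ha0' : deriv a 0 = 0) (hb₀0 : b₀ 0 = 0)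
    (hA : iteratedDeriv 2 a 0 ^ 2 + 4 * deriv b₀ 0 ^ 4 ≠ 0)
    (φ : ℝ → ℝ → Fin 3 → ℝ)
    (hφ : ∀ x y, φ x y =
      ![x, a x + y ^ 2 / 2,
        (b₀ x + b₁ x * y ^ 2 + b₂ x * y ^ 3 + b₃ x y * y ^ 4) ^ 2])
    (γ : ℝ → Fin 3 → ℝ) (hγ : ∀ x, γ x = φ x 0)
    (φX φYY φXYY : ℝ → Fin 3 → ℝ)
    (hφX : ∀ x, φX x = deriv (fun t => φ t 0) x)
    (hφYY : ∀ x, φYY x = iteratedDeriv 2 (φ x) 0)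
    (hφXYY : ∀ x, φXYY x = deriv (fun t => iteratedDeriv 2 (φ t) 0) x)
    (w : ℝ → Fin 3 → ℝ) (hw : ∀ x, w x = cross3 (φX x) (φYY x))
    (ν : ℝ → Fin 3 → ℝ) (hν : ∀ x, ν x = (norm3 (w x))⁻¹ • w x)
    (κs κν : ℝ → ℝ)
    (hκs : ∀ x, κs x =
      det3 (deriv γ x) (iteratedDeriv 2 γ x) (ν x) / norm3 (deriv γ x) ^ 3)
    (hκν : ∀ x, κν x =
      dot3 (iteratedDeriv 2 γ x) (ν x) / norm3 (deriv γ x) ^ 2)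
    (τS0 : ℝ)
    (hτS0 : τS0 =
      det3 (deriv γ 0) (iteratedDeriv 2 γ 0) (iteratedDeriv 3 γ 0) /
        norm3 (cross3 (deriv γ 0) (iteratedDeriv 2 γ 0)) ^ 2)
    (κt0 : ℝ)
    (hκt0 : κt0 =
      det3 (φX 0) (φYY 0) (φXYY 0) / norm3 (cross3 (φX 0) (φYY 0)) ^ 2 -
        det3 (φX 0) (φYY 0) (φXYY 0) * dot3 (φX 0) (φYY 0) /
          (norm3 (φX 0) ^ 2 * norm3 (cross3 (φX 0) (φYY 0)) ^ 2)) :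
    τS0 = (κs 0 * deriv κν 0 - deriv κs 0 * κν 0) / (κs 0 ^ 2 + κν 0 ^ 2) + κt0 := by
  have hd : ∀ {f : ℝ → ℝ}, ContDiff ℝ (⊤ : ℕ∞) f →
      Differentiable ℝ f ∧ Differentiable ℝ (deriv f) ∧ Differentiable ℝ (deriv (deriv f)) :=
    fun hf => ⟨(hf.iterate_deriv 0).differentiable (by simp),
      (hf.iterate_deriv 1).differentiable (by simp), (hf.iterate_deriv 2).differentiable (by simp)⟩
  obtain ⟨da, da', da''⟩ := hd ha
  obtain ⟨db₀, db₀', db₀''⟩ := hd hb₀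
  obtain rfl : γ = fun x => ![x, a x, b₀ x ^ 2] := funext fun x => by simp [hγ, hφ]
  have hφX' : φX = deriv fun x => ![x, a x, b₀ x ^ 2] := funext fun x => by rw [hφX, ← funext hγ]
  have hφYY' : φYY = fun x => ![0, 1, 4 * b₀ x * b₁ x] := funext fun x => by
    rw [hφYY, funext (hφ x)]
    exact iteratedDeriv_two_foldedCuspidalEdge_zero _ _ _ _ _
      ((hb₃.comp (contDiff_const.prodMk contDiff_id)).of_le (by simp))
  have hP := hφYY' ▸ hasDerivAt_vec3_s8 (hasDerivAt_const 0 (0 : ℝ)) (hasDerivAt_const 0 (1 : ℝ))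
    (((db₀ 0).hasDerivAt.const_mul 4).fun_mul ((hd hb₁).1 0).hasDerivAt)
  rw [iteratedDeriv_succ, iteratedDeriv_one] at hA
  rw [hτS0, hκt0, hφXYY, ← funext hφYY, hP.deriv, hφX']
  exact torsion_eq_of_normalForm (hasDerivAt_deriv_singularCurve da db₀ (da' 0) (db₀' 0))
    (hasDerivAt_iteratedDeriv_two_singularCurve da db₀ da' db₀' (da'' 0) (db₀'' 0)) hP
    (by simp [deriv_singularCurve da db₀, ha0', hb₀0]) (by simp [hφYY', hb₀0])
    (by convert hA using 2; rw [hb₀0]; ring) (fun x => by rw [hw, hφX']) hν hκs hκν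

/-- If `a''(0)² + 4b₀'(0)⁴ ≠ 0`, the torsion of the singular curve of
the folded cuspidal edge satisfies, at `x = 0`,
`τ_Σ(0) = (κ_s(0)κ_ν'(0) − κ_s'(0)κ_ν(0))/(κ_s(0)² + κ_ν(0)²) + κ_t(0)`. -/
theorem stmt8 (a b₀ b₁ b₂ : ℝ → ℝ) (b₃ : ℝ → ℝ → ℝ)
    (ha : ContDiff ℝ (⊤ : ℕ∞) a) (hb₀ : ContDiff ℝ (⊤ : ℕ∞) b₀)
    (hb₁ : ContDiff ℝ (⊤ : ℕ∞) b₁) (hb₂ : ContDiff ℝ (⊤ : ℕ∞) b₂)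
    (hb₃ : ContDiff ℝ (⊤ : ℕ∞) (Function.uncurry b₃))
    (ha0 : a 0 = 0) (ha0' : deriv a 0 = 0) (hb₀0 : b₀ 0 = 0)
    (hA : iteratedDeriv 2 a 0 ^ 2 + 4 * deriv b₀ 0 ^ 4 ≠ 0)
    (φ : ℝ → ℝ → Fin 3 → ℝ)
    (hφ : ∀ x y, φ x y =
      ![x, a x + y ^ 2 / 2,
        (b₀ x + b₁ x * y ^ 2 + b₂ x * y ^ 3 + b₃ x y * y ^ 4) ^ 2])
    (γ : ℝ → Fin 3 → ℝ) (hγ : ∀ x, γ x = φ x 0)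
    (φX φYY φXYY : ℝ → Fin 3 → ℝ)
    (hφX : ∀ x, φX x = deriv (fun t => φ t 0) x)
    (hφYY : ∀ x, φYY x = iteratedDeriv 2 (φ x) 0)
    (hφXYY : ∀ x, φXYY x = deriv (fun t => iteratedDeriv 2 (φ t) 0) x)
    (w : ℝ → Fin 3 → ℝ) (hw : ∀ x, w x = cross3 (φX x) (φYY x))
    (ν : ℝ → Fin 3 → ℝ) (hν : ∀ x, ν x = (norm3 (w x))⁻¹ • w x)
    (κs κν : ℝ → ℝ)
    (hκs : ∀ x, κs x =
      det3 (deriv γ x) (iteratedDeriv 2 γ x) (ν x) / norm3 (deriv γ x) ^ 3)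
    (hκν : ∀ x, κν x =
      dot3 (iteratedDeriv 2 γ x) (ν x) / norm3 (deriv γ x) ^ 2)
    (τS0 : ℝ)
    (hτS0 : τS0 =
      det3 (deriv γ 0) (iteratedDeriv 2 γ 0) (iteratedDeriv 3 γ 0) /
        norm3 (cross3 (deriv γ 0) (iteratedDeriv 2 γ 0)) ^ 2)
    (κt0 : ℝ)
    (hκt0 : κt0 =
      det3 (φX 0) (φYY 0) (φXYY 0) / norm3 (cross3 (φX 0) (φYY 0)) ^ 2 -
        det3 (φX 0) (φYY 0) (φXYY 0) * dot3 (φX 0) (φYY 0) /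
          (norm3 (φX 0) ^ 2 * norm3 (cross3 (φX 0) (φYY 0)) ^ 2)) :
    τS0 = (κs 0 * deriv κν 0 - deriv κs 0 * κν 0) / (κs 0 ^ 2 + κν 0 ^ 2) + κt0 :=
  stmt8_general a b₀ b₁ b₂ b₃ ha hb₀ hb₁ hb₃ ha0' hb₀0 hA φ hφ γ hγ φX φYY φXYY hφX hφYY hφXYY w hw
    ν hν κs κν hκs hκν τS0 hτS0 κt0 hκt0
end
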